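/- arXiv:2307.01986 — 2 statements merged into one kernel-verified Lean document; each statement's English description precedes it below -/
import Mathlib

section
/- Verification of the power-utility ansatz for the equilibrium HJB equation: Let T > 0, r > 0, μ > r, σ > 0 and β, γ ∈ (0,1). Let v, w, z : ∇[0,T] → (0,∞) be continuous, g¹, g² : [0,T] → (0,∞), and set k(t,s) = rβ − (μ−r)²β/(2σ²(β−1)) − w(t,s). Suppose φ¹, φ² : ∇[0,T] → (0,∞) are differentiable in s and satisfy, for all 0 ≤ t ≤ s ≤ T, the ODE system ∂φ¹/∂s(t,s) + [k(t,s) − β(φ¹(s,s)/v(s,s))^{1/(β−1)}]φ¹(t,s) + v(t,s)(φ¹(s,s)/v(s,s))^{β/(β−1)} = 0 and ∂φ²/∂s(t,s) − w(t,s)φ²(t,s) + z(t,s) = 0, with φ¹(t,T) = g¹(t), φ²(t,T) = g²(t). Define u(t,s,x,y) = φ¹(t,s)y^β + φ²(t,s)x^γ for 0 ≤ t ≤ s ≤ T and x, y ∈ (0,∞). Then u satisfies the equilibrium HJB equation: u_s(t,s,x,y) + [ (μ−r)² (u_y(s,s,y,y))² / (2σ² (u_{yy}(s,s,y,y))²)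 ] u_{yy}(t,s,x,y) + [ r y − (μ−r)² u_y(s,s,y,y)/(σ² u_{yy}(s,s,y,y)) − ( u_y(s,s,y,y)/(β v(s,s)) )^{1/(β−1)} ] u_y(t,s,x,y) + v(t,s) ( u_y(s,s,y,y)/(β v(s,s)) )^{β/(β−1)} − w(t,s) u(t,s,x,y) + z(t,s) x^γ = 0 for all 0 ≤ t ≤ s ≤ T and x, y ∈ (0,∞), together with the terminal condition u(t,T,x,y) = g¹(t)y^β + g²(t)x^γ. -/
open Set

noncomputable section

/-- First partial derivative of `u(t,s,x,y)` in the (one-dimensional) spatial variable `y`. -/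
def Dy (u : ℝ → ℝ → ℝ → ℝ → ℝ) (t s x y : ℝ) : ℝ := deriv (fun y' => u t s x y') y

/-- Second partial derivative of `u(t,s,x,y)` in `y`. -/
def Dyy (u : ℝ → ℝ → ℝ → ℝ → ℝ) (t s x y : ℝ) : ℝ := deriv (fun y' => Dy u t s x y') y

/-!
For the ansatz `u = φ¹ y^β + φ² x^γ` one has `u_y = β φ¹ y^β / y` and
`u_yy = β (β - 1) φ¹ y^β / y²`, so the Merton ratio `u_y / u_yy` at the diagonal is `y / (β - 1)`
and the feedback consumption `(u_y(s,s,y,y) / (β v(s,s)))^{1/(β-1)}` is `(φ¹(s,s)/v(s,s))^{1/(β-1)} y`.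
Every term of the HJB equation is then `y^β` times a term of the first ODE or `x^γ` times a term
of the second, and the equation collapses to the ODE system.
-/

open Real

section PowerAnsatz

variable (φ1 φ2 : ℝ → ℝ → ℝ) (β γ : ℝ)

lemma Dy_power_ansatz_eq_rpow_sub_one (t s x : ℝ) {y : ℝ} (hy : 0 < y) :
    Dy (fun t s x y => φ1 t s * y ^ β + φ2 t s * x ^ γ) t s x y
      = φ1 t s * (β * y ^ (β - 1)) :=
  (((hasDerivAt_rpow_const (Or.inl hy.ne')).const_mul (φ1 t s)).add_const _).deriv

lemma Dy_power_ansatz (t s x : ℝ) {y : ℝ} (hy : 0 < y) :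
    Dy (fun t s x y => φ1 t s * y ^ β + φ2 t s * x ^ γ) t s x y = β * φ1 t s * y ^ β / y := by
  rw [Dy_power_ansatz_eq_rpow_sub_one φ1 φ2 β γ t s x hy, rpow_sub_one hy.ne']
  ring

lemma Dyy_power_ansatz (t s x : ℝ) {y : ℝ} (hy : 0 < y) :
    Dyy (fun t s x y => φ1 t s * y ^ β + φ2 t s * x ^ γ) t s x y
      = β * (β - 1) * φ1 t s * y ^ β / y ^ 2 := by
  have hDy : (fun y' => Dy (fun t s x y => φ1 t s * y ^ β + φ2 t s * x ^ γ) t s x y')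
      =ᶠ[nhds y] fun y' => φ1 t s * (β * y' ^ (β - 1)) := by
    filter_upwards [eventually_gt_nhds hy] with y' hy'
    exact Dy_power_ansatz_eq_rpow_sub_one φ1 φ2 β γ t s x hy'
  rw [Dyy, hDy.deriv_eq,
    (((hasDerivAt_rpow_const (Or.inl hy.ne')).const_mul β).const_mul (φ1 t s)).deriv,
    rpow_sub_one hy.ne', rpow_sub_one hy.ne']
  ring

end PowerAnsatz

lemma power_marginal_div_rpow {a V β y : ℝ} (ha : 0 ≤ a) (hV : 0 ≤ V) (hβ : β ≠ 0) (hy : 0 < y)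
    (p : ℝ) : (β * a * y ^ β / y / (β * V)) ^ p = (a / V) ^ p * y ^ ((β - 1) * p) := by
  have hsplit : β * a * y ^ β / y / (β * V) = a / V * y ^ (β - 1) := by
    rw [rpow_sub_one hy.ne']
    field_simp
  rw [hsplit, mul_rpow (div_nonneg ha hV) (rpow_nonneg hy.le _), rpow_mul hy.le]

theorem power_utility_ansatz_verification_general
    {T r mu sig β γ : ℝ} (hsig : 0 < sig)
    (hβ : β ∈ Ioo (0 : ℝ) 1)
    (v w z : ℝ → ℝ → ℝ) (g1 g2 : ℝ → ℝ)
    (hvpos : ∀ t s : ℝ, 0 ≤ t → t ≤ s → s ≤ T → 0 < v t s)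
    (φ1 φ2 φ1' φ2' : ℝ → ℝ → ℝ)
    (hφpos : ∀ t s : ℝ, 0 ≤ t → t ≤ s → s ≤ T → 0 < φ1 t s ∧ 0 < φ2 t s)
    (hφderiv : ∀ t s : ℝ, 0 ≤ t → t ≤ s → s ≤ T →
      HasDerivWithinAt (fun s' => φ1 t s') (φ1' t s) (Icc t T) s ∧
      HasDerivWithinAt (fun s' => φ2 t s') (φ2' t s) (Icc t T) s)
    (hODE1 : ∀ t s : ℝ, 0 ≤ t → t ≤ s → s ≤ T →
      φ1' t s
          + ((r * β - (mu - r) ^ 2 * β / (2 * sig ^ 2 * (β - 1)) - w t s)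
              - β * (φ1 s s / v s s) ^ ((1 : ℝ) / (β - 1))) * φ1 t s
          + v t s * (φ1 s s / v s s) ^ (β / (β - 1)) = 0)
    (hODE2 : ∀ t s : ℝ, 0 ≤ t → t ≤ s → s ≤ T →
      φ2' t s - w t s * φ2 t s + z t s = 0)
    (hterm : ∀ t ∈ Icc (0 : ℝ) T, φ1 t T = g1 t ∧ φ2 t T = g2 t) :
    ∀ t s x y : ℝ, 0 ≤ t → t ≤ s → s ≤ T → 0 < x → 0 < y →
      (HasDerivWithinAt (fun s' => φ1 t s' * y ^ β + φ2 t s' * x ^ γ)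
        (-(((mu - r) ^ 2
              * (Dy (fun t s x y => φ1 t s * y ^ β + φ2 t s * x ^ γ) s s y y) ^ 2
              / (2 * sig ^ 2
                * (Dyy (fun t s x y => φ1 t s * y ^ β + φ2 t s * x ^ γ) s s y y) ^ 2))
            * Dyy (fun t s x y => φ1 t s * y ^ β + φ2 t s * x ^ γ) t s x y
          + (r * y
              - (mu - r) ^ 2 * Dy (fun t s x y => φ1 t s * y ^ β + φ2 t s * x ^ γ) s s y y
                / (sig ^ 2 * Dyy (fun t s x y => φ1 t s * y ^ β + φ2 t s * x ^ γ) s s y y)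
              - (Dy (fun t s x y => φ1 t s * y ^ β + φ2 t s * x ^ γ) s s y y / (β * v s s))
                  ^ ((1 : ℝ) / (β - 1)))
            * Dy (fun t s x y => φ1 t s * y ^ β + φ2 t s * x ^ γ) t s x y
          + v t s
            * (Dy (fun t s x y => φ1 t s * y ^ β + φ2 t s * x ^ γ) s s y y / (β * v s s))
                ^ (β / (β - 1))
          - w t s * (φ1 t s * y ^ β + φ2 t s * x ^ γ) + z t s * x ^ γ))
        (Icc t T) s) ∧
      φ1 t T * y ^ β + φ2 t T * x ^ γ = g1 t * y ^ β + g2 t * x ^ γ := by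
  intro t s x y ht hts hsT _ hy
  obtain ⟨hterm1, hterm2⟩ := hterm t ⟨ht, hts.trans hsT⟩
  refine ⟨?_, by rw [hterm1, hterm2]⟩
  obtain ⟨hφ1, hφ2⟩ := hφderiv t s ht hts hsT
  refine ((hφ1.mul_const (y ^ β)).add (hφ2.mul_const (x ^ γ))).congr_deriv ?_
  have hs : 0 ≤ s := ht.trans hts
  have hV : 0 < v s s := hvpos s s hs le_rfl hsT
  have ha : 0 < φ1 s s := (hφpos s s hs le_rfl hsT).1
  have hβ0 : β ≠ 0 := hβ.1.ne'
  have hβ1 : β - 1 ≠ 0 := sub_ne_zero.2 hβ.2.ne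
  simp only [Dy_power_ansatz φ1 φ2 β γ _ _ _ hy, Dyy_power_ansatz φ1 φ2 β γ _ _ _ hy,
    power_marginal_div_rpow ha.le hV.le hβ0 hy, mul_one_div_cancel hβ1, rpow_one,
    mul_div_cancel₀ _ hβ1]
  linear_combination (norm := skip)
    y ^ β * hODE1 t s ht hts hsT + x ^ γ * hODE2 t s ht hts hsT
  field_simp
  ring

/-- **Verification of the power-utility ansatz for the equilibrium HJB equation:**
if `(φ¹, φ²)` solves the ODE system, then `u(t,s,x,y) = φ¹(t,s)y^β + φ²(t,s)x^γ`
satisfies the equilibrium HJB equation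
`u_s + [(μ−r)² u_y(s,s,y,y)² / (2σ² u_{yy}(s,s,y,y)²)] u_{yy}
 + [ry − (μ−r)² u_y(s,s,y,y)/(σ² u_{yy}(s,s,y,y)) − (u_y(s,s,y,y)/(βv(s,s)))^{1/(β−1)}] u_y
 + v(t,s) (u_y(s,s,y,y)/(βv(s,s)))^{β/(β−1)} − w(t,s) u + z(t,s) x^γ = 0`
on `∇[0,T] × (0,∞)²`, with terminal condition `u(t,T,x,y) = g¹(t)y^β + g²(t)x^γ`.
(The `s`-derivative is expressed through `HasDerivWithinAt` on `[t,T]`.) -/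
theorem power_utility_ansatz_verification
    {T r mu sig β γ : ℝ} (hT : 0 < T) (hr : 0 < r) (hmu : r < mu) (hsig : 0 < sig)
    (hβ : β ∈ Ioo (0 : ℝ) 1) (hγ : γ ∈ Ioo (0 : ℝ) 1)
    (v w z : ℝ → ℝ → ℝ) (g1 g2 : ℝ → ℝ)
    (hvpos : ∀ t s : ℝ, 0 ≤ t → t ≤ s → s ≤ T → 0 < v t s)
    (hwpos : ∀ t s : ℝ, 0 ≤ t → t ≤ s → s ≤ T → 0 < w t s)
    (hzpos : ∀ t s : ℝ, 0 ≤ t → t ≤ s → s ≤ T → 0 < z t s)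
    (hvc : ContinuousOn (fun p : ℝ × ℝ => v p.1 p.2)
      {p : ℝ × ℝ | 0 ≤ p.1 ∧ p.1 ≤ p.2 ∧ p.2 ≤ T})
    (hg1pos : ∀ t ∈ Icc (0 : ℝ) T, 0 < g1 t) (hg2pos : ∀ t ∈ Icc (0 : ℝ) T, 0 < g2 t)
    (φ1 φ2 φ1' φ2' : ℝ → ℝ → ℝ)
    (hφpos : ∀ t s : ℝ, 0 ≤ t → t ≤ s → s ≤ T → 0 < φ1 t s ∧ 0 < φ2 t s)
    (hφderiv : ∀ t s : ℝ, 0 ≤ t → t ≤ s → s ≤ T →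
      HasDerivWithinAt (fun s' => φ1 t s') (φ1' t s) (Icc t T) s ∧
      HasDerivWithinAt (fun s' => φ2 t s') (φ2' t s) (Icc t T) s)
    (hODE1 : ∀ t s : ℝ, 0 ≤ t → t ≤ s → s ≤ T →
      φ1' t s
          + ((r * β - (mu - r) ^ 2 * β / (2 * sig ^ 2 * (β - 1)) - w t s)
              - β * (φ1 s s / v s s) ^ ((1 : ℝ) / (β - 1))) * φ1 t s
          + v t s * (φ1 s s / v s s) ^ (β / (β - 1)) = 0)
    (hODE2 : ∀ t s : ℝ, 0 ≤ t → t ≤ s → s ≤ T →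
      φ2' t s - w t s * φ2 t s + z t s = 0)
    (hterm : ∀ t ∈ Icc (0 : ℝ) T, φ1 t T = g1 t ∧ φ2 t T = g2 t) :
    ∀ t s x y : ℝ, 0 ≤ t → t ≤ s → s ≤ T → 0 < x → 0 < y →
      (HasDerivWithinAt (fun s' => φ1 t s' * y ^ β + φ2 t s' * x ^ γ)
        (-(((mu - r) ^ 2
              * (Dy (fun t s x y => φ1 t s * y ^ β + φ2 t s * x ^ γ) s s y y) ^ 2
              / (2 * sig ^ 2
                * (Dyy (fun t s x y => φ1 t s * y ^ β + φ2 t s * x ^ γ) s s y y) ^ 2))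
            * Dyy (fun t s x y => φ1 t s * y ^ β + φ2 t s * x ^ γ) t s x y
          + (r * y
              - (mu - r) ^ 2 * Dy (fun t s x y => φ1 t s * y ^ β + φ2 t s * x ^ γ) s s y y
                / (sig ^ 2 * Dyy (fun t s x y => φ1 t s * y ^ β + φ2 t s * x ^ γ) s s y y)
              - (Dy (fun t s x y => φ1 t s * y ^ β + φ2 t s * x ^ γ) s s y y / (β * v s s))
                  ^ ((1 : ℝ) / (β - 1)))
            * Dy (fun t s x y => φ1 t s * y ^ β + φ2 t s * x ^ γ) t s x y
          + v t s
            * (Dy (fun t s x y => φ1 t s * y ^ β + φ2 t s * x ^ γ) s s y y / (β * v s s))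
                ^ (β / (β - 1))
          - w t s * (φ1 t s * y ^ β + φ2 t s * x ^ γ) + z t s * x ^ γ))
        (Icc t T) s) ∧
      φ1 t T * y ^ β + φ2 t T * x ^ γ = g1 t * y ^ β + g2 t * x ^ γ :=
  power_utility_ansatz_verification_general hsig hβ v w z g1 g2 hvpos φ1 φ2 φ1' φ2' hφpos hφderiv
    hODE1 hODE2 hterm
end
end

section
/- Two-sided bounds for the nonlinear integral equation of the financial example: Let T > 0 and β ∈ (0,1). Let φ̄ : [0,T] → (0,∞) be continuous, let k : {(s,τ) : 0 ≤ s ≤ τ ≤ T} → ℝ, ḡ : [0,T] → (0,∞) and v̄ : {(s,λ) : 0 ≤ s ≤ λ ≤ T} → (0,∞) be continuous, and suppose that for all s ∈ [0,T]: φ̄(s) = exp{ ∫_s^T [k(s,τ) − β φ̄(τ)^{1/(β−1)}] dτ } ḡ(s) + ∫_s^T exp{ ∫_s^λ [k(s,τ) − β φ̄(τ)^{1/(β−1)}] dτ } v̄(s,λ) φ̄(λ)^{β/(β−1)} dλ. Assume there exist constants g₀ > 0 and ϱ > 0 such that ḡ(s) exp{∫_s^T k(s,τ) dτ} ≥ g₀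 for all s ∈ [0,T] and v̄(s,λ) exp{∫_s^λ k(s,τ) dτ} ≥ exp{−ϱ(λ−s)} for all 0 ≤ s ≤ λ ≤ T. Then φ̄(s) ≥ exp{−ϱ(T−s)} g₀ for all s ∈ [0,T]; consequently, with δ₀ := exp{−ϱT} g₀ > 0, one also has φ̄(s) ≤ exp{∫_s^T k(s,τ) dτ} ḡ(s) + δ₀^{β/(β−1)} ∫_s^T exp{∫_s^λ k(s,τ) dτ} v̄(s,λ) dλ for all s ∈ [0,T]. -/
/-!
Put `c = β φ̄^{1/(β-1)} ≥ 0`, so that `φ̄^{β/(β-1)} = φ̄^{1/(β-1)} φ̄ ≥ c φ̄` and the exponential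
factors split as `e^{-∫c} e^{∫k}`. Let `s₀` minimise `φ̄(x) e^{-ϱx}` on `[0,T]`. Then
`φ̄(λ) ≥ φ̄(s₀) e^{ϱ(λ-s₀)}`, which exactly compensates the factor `e^{-ϱ(λ-s₀)}` in the lower bound
for `v̄`, so the integrand of the equation at `s₀` dominates `φ̄(s₀) c(λ) e^{-∫_{s₀}^λ c}`. Its
integral is `φ̄(s₀) (1 - e^{-∫_{s₀}^T c})`, and the equation then reads
`φ̄(s₀) ≥ e^{-∫c} g₀ + φ̄(s₀)(1 - e^{-∫c})`, i.e. `φ̄(s₀) ≥ g₀`; minimality spreads this to all `s`.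
The upper bound follows by dropping the factors `e^{-∫c} ≤ 1` and using `φ̄ ≥ δ₀` in the
decreasing power `x ↦ x^{β/(β-1)}`.
-/

open Set intervalIntegral Real

noncomputable section

theorem ContinuousOn.continuousOn_primitive_Icc {c : ℝ → ℝ} {a b : ℝ} (hab : a ≤ b)
    (hc : ContinuousOn c (Icc a b)) : ContinuousOn (fun x => ∫ t in a..x, c t) (Icc a b) := by
  simpa only [uIcc_of_le hab] using
    continuousOn_primitive_interval' (hc.intervalIntegrable_of_Icc hab) left_mem_uIcc

theorem integral_mul_exp_neg_integral {c : ℝ → ℝ} {a b : ℝ} (hab : a ≤ b)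
    (hc : ContinuousOn c (Icc a b)) :
    ∫ x in a..b, c x * exp (-∫ t in a..x, c t) = 1 - exp (-∫ t in a..b, c t) := by
  have hderiv : ∀ x ∈ Ioo a b,
      HasDerivAt (fun y => -exp (-∫ t in a..y, c t)) (c x * exp (-∫ t in a..x, c t)) x := by
    intro x hx
    have hcx : ContinuousAt c x := hc.continuousAt (Icc_mem_nhds hx.1 hx.2)
    have hC := integral_hasDerivAt_right
      ((hc.mono (Icc_subset_Icc_right hx.2.le)).intervalIntegrable_of_Icc hx.1.le)
      ((hc.mono Ioo_subset_Icc_self).stronglyMeasurableAtFilter isOpen_Ioo x hx) hcx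
    exact hC.neg.exp.neg.congr_deriv (by simp only [Pi.neg_apply]; ring)
  rw [integral_eq_sub_of_hasDerivAt_of_le hab
    ((hc.continuousOn_primitive_Icc hab).neg.rexp.neg) hderiv
    ((hc.mul (hc.continuousOn_primitive_Icc hab).neg.rexp).intervalIntegrable_of_Icc hab)]
  simp only [Pi.neg_apply, integral_same, neg_zero, exp_zero]
  ring

theorem le_of_eq_exp_neg_integral_mul_add {c W : ℝ → ℝ} {a b x₀ G g₀ : ℝ} (hab : a ≤ b)
    (hc : ContinuousOn c (Icc a b)) (hW : ContinuousOn W (Icc a b))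
    (heq : x₀ = exp (-∫ t in a..b, c t) * G + ∫ x in a..b, exp (-∫ t in a..x, c t) * W x)
    (hG : g₀ ≤ G) (hcW : ∀ x ∈ Icc a b, x₀ * c x ≤ W x) : g₀ ≤ x₀ := by
  set A := exp (-∫ t in a..b, c t)
  have hdisc : ContinuousOn (fun x => exp (-∫ t in a..x, c t)) (Icc a b) :=
    (hc.continuousOn_primitive_Icc hab).neg.rexp
  have hint : x₀ * (1 - A) ≤ ∫ x in a..b, exp (-∫ t in a..x, c t) * W x := by
    rw [← integral_mul_exp_neg_integral hab hc, ← integral_const_mul]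
    refine integral_mono_on hab (((hc.mul hdisc).const_smul x₀).intervalIntegrable_of_Icc hab)
      ((hdisc.mul hW).intervalIntegrable_of_Icc hab) fun x hx => ?_
    rw [← mul_assoc, mul_comm _ (exp _)]
    exact mul_le_mul_of_nonneg_left (hcW x hx) (exp_pos _).le
  have hA : 0 < A := exp_pos _
  -- `x₀ ≥ A G + x₀ (1 - A)`, i.e. `A x₀ ≥ A G ≥ A g₀`
  nlinarith [mul_le_mul_of_nonneg_left hG hA.le]

theorem exp_integral_sub_mul_add_integral {f c w : ℝ → ℝ} {a b G : ℝ} (hab : a ≤ b)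
    (hf : ContinuousOn f (Icc a b)) (hc : ContinuousOn c (Icc a b)) :
    exp (∫ t in a..b, f t - c t) * G + ∫ x in a..b, exp (∫ t in a..x, f t - c t) * w x =
      exp (-∫ t in a..b, c t) * (exp (∫ t in a..b, f t) * G) +
        ∫ x in a..b, exp (-∫ t in a..x, c t) * (exp (∫ t in a..x, f t) * w x) := by
  have hsplit : ∀ x ∈ Icc a b,
      exp (∫ t in a..x, f t - c t) = exp (-∫ t in a..x, c t) * exp (∫ t in a..x, f t) := by
    intro x hx
    have hsub : Icc a x ⊆ Icc a b := Icc_subset_Icc_right hx.2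
    rw [integral_sub ((hf.mono hsub).intervalIntegrable_of_Icc hx.1)
      ((hc.mono hsub).intervalIntegrable_of_Icc hx.1), ← exp_add, neg_add_eq_sub]
  rw [hsplit b (right_mem_Icc.2 hab), mul_assoc]
  congr 1
  refine integral_congr fun x hx => ?_
  rw [uIcc_of_le hab] at hx
  simp only [hsplit x hx, mul_assoc]

theorem exp_neg_integral_mul_add_integral_le {c W U : ℝ → ℝ} {a b G : ℝ} (hab : a ≤ b)
    (hc : ContinuousOn c (Icc a b)) (hc₀ : ∀ x ∈ Icc a b, 0 ≤ c x) (hG : 0 ≤ G)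
    (hW : ContinuousOn W (Icc a b)) (hU : IntervalIntegrable U MeasureTheory.volume a b)
    (hW₀ : ∀ x ∈ Icc a b, 0 ≤ W x) (hWU : ∀ x ∈ Icc a b, W x ≤ U x) :
    exp (-∫ t in a..b, c t) * G + ∫ x in a..b, exp (-∫ t in a..x, c t) * W x ≤
      G + ∫ x in a..b, U x := by
  have hdisc : ∀ x ∈ Icc a b, exp (-∫ t in a..x, c t) ≤ 1 := fun x hx =>
    exp_le_one_iff.2 <| neg_nonpos.2 <| integral_nonneg hx.1 fun t ht =>
      hc₀ t ⟨ht.1, ht.2.trans hx.2⟩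
  gcongr ?_ + ?_
  · exact mul_le_of_le_one_left hG (hdisc b (right_mem_Icc.2 hab))
  · refine integral_mono_on hab
      (((hc.continuousOn_primitive_Icc hab).neg.rexp.mul hW).intervalIntegrable_of_Icc hab) hU
      fun x hx => ?_
    exact (mul_le_of_le_one_left (hW₀ x hx) (hdisc x hx)).trans (hWU x hx)

theorem exp_neg_mul_le_of_eq_exp_neg_integral_mul_add {φ c G : ℝ → ℝ} {W : ℝ → ℝ → ℝ}
    {a b ϱ g₀ : ℝ} (hϱ : 0 ≤ ϱ) (hg₀ : 0 ≤ g₀) (hφ : ContinuousOn φ (Icc a b))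
    (hc : ContinuousOn c (Icc a b)) (hc₀ : ∀ x ∈ Icc a b, 0 ≤ c x)
    (hW : ∀ s ∈ Icc a b, ContinuousOn (W s) (Icc s b))
    (heq : ∀ s ∈ Icc a b, φ s = exp (-∫ t in s..b, c t) * G s +
      ∫ x in s..b, exp (-∫ t in s..x, c t) * W s x)
    (hG : ∀ s ∈ Icc a b, g₀ ≤ G s)
    (hcW : ∀ s ∈ Icc a b, ∀ x ∈ Icc s b, exp (-ϱ * (x - s)) * (c x * φ x) ≤ W s x) :
    ∀ s ∈ Icc a b, exp (-ϱ * (b - s)) * g₀ ≤ φ s := by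
  intro s hs
  obtain ⟨s₀, hs₀, hmin⟩ := isCompact_Icc.exists_isMinOn ⟨s, hs⟩
    (hφ.mul (continuous_exp.comp (continuous_const.mul continuous_id)).continuousOn :
      ContinuousOn (fun x => φ x * exp (-ϱ * x)) (Icc a b))
  have hgrowth : ∀ x ∈ Icc a b, φ s₀ ≤ exp (-ϱ * (x - s₀)) * φ x := by
    intro x hx
    have h : φ s₀ * exp (-ϱ * s₀) ≤ φ x * exp (-ϱ * x) := hmin hx
    calc φ s₀ = φ s₀ * exp (-ϱ * s₀) * exp (ϱ * s₀) := by
          rw [mul_assoc, ← exp_add]; ring_nf; rw [exp_zero, mul_one]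
      _ ≤ φ x * exp (-ϱ * x) * exp (ϱ * s₀) := by gcongr
      _ = exp (-ϱ * (x - s₀)) * φ x := by rw [mul_assoc, ← exp_add]; ring_nf
  have hφs₀ : g₀ ≤ φ s₀ := by
    refine le_of_eq_exp_neg_integral_mul_add hs₀.2 (hc.mono (Icc_subset_Icc_left hs₀.1))
      (hW s₀ hs₀) (heq s₀ hs₀) (hG s₀ hs₀) fun x hx => ?_
    have hx' : x ∈ Icc a b := ⟨hs₀.1.trans hx.1, hx.2⟩
    calc φ s₀ * c x ≤ exp (-ϱ * (x - s₀)) * φ x * c x :=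
          mul_le_mul_of_nonneg_right (hgrowth x hx') (hc₀ x hx')
      _ = exp (-ϱ * (x - s₀)) * (c x * φ x) := by ring
      _ ≤ W s₀ x := hcW s₀ hs₀ x hx
  calc exp (-ϱ * (b - s)) * g₀ ≤ exp (-ϱ * (s₀ - s)) * g₀ :=
        mul_le_mul_of_nonneg_right (exp_le_exp.2 (by nlinarith [hs₀.2])) hg₀
    _ ≤ exp (-ϱ * (s₀ - s)) * φ s₀ := by gcongr
    _ ≤ exp (-ϱ * (s₀ - s)) * (exp (-ϱ * (s - s₀)) * φ s) := by gcongr; exact hgrowth s hs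
    _ = φ s := by rw [← mul_assoc, ← exp_add]; ring_nf; rw [exp_zero, one_mul]

theorem mul_rpow_one_div_sub_one_mul_le_rpow {β x : ℝ} (hβ : β ∈ Ioo (0 : ℝ) 1) (hx : 0 < x) :
    β * x ^ ((1 : ℝ) / (β - 1)) * x ≤ x ^ (β / (β - 1)) := by
  have hq : β / (β - 1) = 1 / (β - 1) + 1 := by field_simp [(sub_neg.2 hβ.2).ne]; ring
  rw [hq, rpow_add_one hx.ne']
  gcongr
  exact mul_le_of_le_one_left (by positivity) hβ.2.le

theorem ContinuousOn.continuousOn_slice {k : ℝ → ℝ → ℝ} {T s : ℝ}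
    (hk : ContinuousOn (fun p : ℝ × ℝ => k p.1 p.2) {p : ℝ × ℝ | 0 ≤ p.1 ∧ p.1 ≤ p.2 ∧ p.2 ≤ T})
    (hs : 0 ≤ s) : ContinuousOn (k s) (Icc s T) :=
  hk.comp (Continuous.prodMk_right s).continuousOn fun _ hτ => ⟨hs, hτ.1, hτ.2⟩

def consumptionDiscount (β : ℝ) (φ : ℝ → ℝ) (τ : ℝ) : ℝ := β * φ τ ^ ((1 : ℝ) / (β - 1))

def runningReward (β : ℝ) (φ : ℝ → ℝ) (k v : ℝ → ℝ → ℝ) (s x : ℝ) : ℝ :=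
  exp (∫ τ in s..x, k s τ) * (v s x * φ x ^ (β / (β - 1)))

section

variable {T β : ℝ} {φ g : ℝ → ℝ} {k v : ℝ → ℝ → ℝ}

theorem continuousOn_consumptionDiscount (hφc : ContinuousOn φ (Icc 0 T))
    (hφpos : ∀ s ∈ Icc (0 : ℝ) T, 0 < φ s) :
    ContinuousOn (consumptionDiscount β φ) (Icc 0 T) :=
  continuousOn_const.mul (hφc.rpow_const fun x hx => Or.inl (hφpos x hx).ne')

theorem consumptionDiscount_nonneg {τ : ℝ} (hβ : 0 ≤ β) (hφ : 0 < φ τ) :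
    0 ≤ consumptionDiscount β φ τ :=
  mul_nonneg hβ (rpow_nonneg hφ.le _)

theorem continuousOn_runningReward {s : ℝ} (hφc : ContinuousOn φ (Icc 0 T))
    (hφpos : ∀ s ∈ Icc (0 : ℝ) T, 0 < φ s)
    (hkc : ContinuousOn (fun p : ℝ × ℝ => k p.1 p.2)
      {p : ℝ × ℝ | 0 ≤ p.1 ∧ p.1 ≤ p.2 ∧ p.2 ≤ T})
    (hvc : ContinuousOn (fun p : ℝ × ℝ => v p.1 p.2)
      {p : ℝ × ℝ | 0 ≤ p.1 ∧ p.1 ≤ p.2 ∧ p.2 ≤ T}) (hs : s ∈ Icc (0 : ℝ) T) :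
    ContinuousOn (runningReward β φ k v s) (Icc s T) :=
  ((hkc.continuousOn_slice hs.1).continuousOn_primitive_Icc hs.2).rexp.mul
    ((hvc.continuousOn_slice hs.1).mul ((hφc.mono (Icc_subset_Icc_left hs.1)).rpow_const
      fun x hx => Or.inl (hφpos x ⟨hs.1.trans hx.1, hx.2⟩).ne'))

theorem runningReward_nonneg {s x : ℝ} (hφ : 0 < φ x) (hv : 0 ≤ v s x) :
    0 ≤ runningReward β φ k v s x :=
  mul_nonneg (exp_pos _).le (mul_nonneg hv (rpow_nonneg hφ.le _))

theorem exp_neg_mul_consumptionDiscount_mul_le_runningReward {s x ϱ : ℝ}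
    (hβ : β ∈ Ioo (0 : ℝ) 1) (hφ : 0 < φ x) (hv : 0 ≤ v s x)
    (hvlb : exp (-ϱ * (x - s)) ≤ v s x * exp (∫ τ in s..x, k s τ)) :
    exp (-ϱ * (x - s)) * (consumptionDiscount β φ x * φ x) ≤ runningReward β φ k v s x :=
  calc exp (-ϱ * (x - s)) * (consumptionDiscount β φ x * φ x)
      ≤ (v s x * exp (∫ τ in s..x, k s τ)) * φ x ^ (β / (β - 1)) :=
        mul_le_mul hvlb (mul_rpow_one_div_sub_one_mul_le_rpow hβ hφ)
          (mul_nonneg (consumptionDiscount_nonneg hβ.1.le hφ) hφ.le)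
          (mul_nonneg hv (exp_pos _).le)
    _ = runningReward β φ k v s x := by unfold runningReward; ring

theorem runningReward_le {s x δ : ℝ} (hβ : β ∈ Ioo (0 : ℝ) 1) (hδ : 0 < δ) (hφ : δ ≤ φ x)
    (hv : 0 ≤ v s x) :
    runningReward β φ k v s x ≤ δ ^ (β / (β - 1)) * (exp (∫ τ in s..x, k s τ) * v s x) :=
  calc runningReward β φ k v s x = exp (∫ τ in s..x, k s τ) * v s x * φ x ^ (β / (β - 1)) := by
        unfold runningReward; ring
    _ ≤ exp (∫ τ in s..x, k s τ) * v s x * δ ^ (β / (β - 1)) :=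
        mul_le_mul_of_nonneg_left (rpow_le_rpow_of_nonpos hδ hφ
            (div_nonpos_of_nonneg_of_nonpos hβ.1.le (sub_nonpos.2 hβ.2.le)))
          (mul_nonneg (exp_pos _).le hv)
    _ = δ ^ (β / (β - 1)) * (exp (∫ τ in s..x, k s τ) * v s x) := by ring

theorem eq_exp_neg_integral_consumptionDiscount_mul_add (hφc : ContinuousOn φ (Icc 0 T))
    (hφpos : ∀ s ∈ Icc (0 : ℝ) T, 0 < φ s)
    (hkc : ContinuousOn (fun p : ℝ × ℝ => k p.1 p.2)
      {p : ℝ × ℝ | 0 ≤ p.1 ∧ p.1 ≤ p.2 ∧ p.2 ≤ T})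
    (heq : ∀ s ∈ Icc (0 : ℝ) T,
      φ s = exp (∫ τ in s..T, k s τ - β * φ τ ^ ((1 : ℝ) / (β - 1))) * g s
        + ∫ lam in s..T,
            exp (∫ τ in s..lam, k s τ - β * φ τ ^ ((1 : ℝ) / (β - 1)))
              * v s lam * φ lam ^ (β / (β - 1))) :
    ∀ s ∈ Icc (0 : ℝ) T, φ s =
      exp (-∫ t in s..T, consumptionDiscount β φ t) * (exp (∫ τ in s..T, k s τ) * g s) +
        ∫ x in s..T, exp (-∫ t in s..x, consumptionDiscount β φ t) * runningReward β φ k v s x := by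
  intro s hs
  rw [heq s hs]
  simp only [mul_assoc]
  exact exp_integral_sub_mul_add_integral hs.2 (hkc.continuousOn_slice hs.1)
    ((continuousOn_consumptionDiscount hφc hφpos).mono (Icc_subset_Icc_left hs.1))

end

theorem integral_equation_two_sided_bounds_general
    {T β : ℝ} (hβ : β ∈ Ioo (0 : ℝ) 1)
    (φ : ℝ → ℝ) (k : ℝ → ℝ → ℝ) (g : ℝ → ℝ) (v : ℝ → ℝ → ℝ)
    (hφc : ContinuousOn φ (Icc 0 T)) (hφpos : ∀ s ∈ Icc (0 : ℝ) T, 0 < φ s)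
    (hkc : ContinuousOn (fun p : ℝ × ℝ => k p.1 p.2)
      {p : ℝ × ℝ | 0 ≤ p.1 ∧ p.1 ≤ p.2 ∧ p.2 ≤ T})
    (hgpos : ∀ s ∈ Icc (0 : ℝ) T, 0 < g s)
    (hvc : ContinuousOn (fun p : ℝ × ℝ => v p.1 p.2)
      {p : ℝ × ℝ | 0 ≤ p.1 ∧ p.1 ≤ p.2 ∧ p.2 ≤ T})
    (hvpos : ∀ s lam : ℝ, 0 ≤ s → s ≤ lam → lam ≤ T → 0 < v s lam)
    (heq : ∀ s ∈ Icc (0 : ℝ) T,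
      φ s = Real.exp (∫ τ in s..T, k s τ - β * φ τ ^ ((1 : ℝ) / (β - 1))) * g s
        + ∫ lam in s..T,
            Real.exp (∫ τ in s..lam, k s τ - β * φ τ ^ ((1 : ℝ) / (β - 1)))
              * v s lam * φ lam ^ (β / (β - 1)))
    (g0 ϱ : ℝ) (hg0 : 0 < g0) (hϱ : 0 < ϱ)
    (hglb : ∀ s ∈ Icc (0 : ℝ) T, g0 ≤ g s * Real.exp (∫ τ in s..T, k s τ))
    (hvlb : ∀ s lam : ℝ, 0 ≤ s → s ≤ lam → lam ≤ T →
      Real.exp (-ϱ * (lam - s)) ≤ v s lam * Real.exp (∫ τ in s..lam, k s τ)) :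
    (∀ s ∈ Icc (0 : ℝ) T, Real.exp (-ϱ * (T - s)) * g0 ≤ φ s) ∧
    (∀ s ∈ Icc (0 : ℝ) T,
      φ s ≤ Real.exp (∫ τ in s..T, k s τ) * g s
        + (Real.exp (-ϱ * T) * g0) ^ (β / (β - 1))
            * ∫ lam in s..T, Real.exp (∫ τ in s..lam, k s τ) * v s lam) := by
  have hc := continuousOn_consumptionDiscount (β := β) hφc hφpos
  have hc₀ : ∀ τ ∈ Icc (0 : ℝ) T, 0 ≤ consumptionDiscount β φ τ := fun τ hτ =>
    consumptionDiscount_nonneg hβ.1.le (hφpos τ hτ)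
  have hsplit := eq_exp_neg_integral_consumptionDiscount_mul_add (v := v) hφc hφpos hkc heq
  have lower := exp_neg_mul_le_of_eq_exp_neg_integral_mul_add hϱ.le hg0.le hφc hc hc₀
    (fun s hs => continuousOn_runningReward hφc hφpos hkc hvc hs) hsplit
    (fun s hs => (hglb s hs).trans_eq (mul_comm _ _)) fun s hs x hx =>
      exp_neg_mul_consumptionDiscount_mul_le_runningReward hβ (hφpos x ⟨hs.1.trans hx.1, hx.2⟩)
        (hvpos s x hs.1 hx.1 hx.2).le (hvlb s x hs.1 hx.1 hx.2)
  refine ⟨lower, fun s hs => (hsplit s hs).trans_le ?_⟩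
  have hmem {x} (hx : x ∈ Icc s T) : x ∈ Icc (0 : ℝ) T := ⟨hs.1.trans hx.1, hx.2⟩
  have hδ {x} (hx : x ∈ Icc s T) : Real.exp (-ϱ * T) * g0 ≤ φ x :=
    (mul_le_mul_of_nonneg_right (exp_le_exp.2 (by nlinarith [(hmem hx).1])) hg0.le).trans
      (lower x (hmem hx))
  rw [← integral_const_mul]
  exact exp_neg_integral_mul_add_integral_le hs.2 (hc.mono (Icc_subset_Icc_left hs.1))
    (fun x hx => hc₀ x (hmem hx)) (mul_nonneg (exp_pos _).le (hgpos s hs).le)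
    (continuousOn_runningReward hφc hφpos hkc hvc hs)
    ((continuousOn_const.mul (((hkc.continuousOn_slice hs.1).continuousOn_primitive_Icc
      hs.2).rexp.mul (hvc.continuousOn_slice hs.1))).intervalIntegrable_of_Icc hs.2)
    (fun x hx => runningReward_nonneg (hφpos x (hmem hx)) (hvpos s x hs.1 hx.1 hx.2).le)
    fun x hx => runningReward_le hβ (by positivity) (hδ hx) (hvpos s x hs.1 hx.1 hx.2).le

/-- **Two-sided bounds for the nonlinear integral equation of the financial example:**
if `φ̄` is a continuous positive solution of
`φ̄(s) = exp{∫_s^T [k(s,τ) − β φ̄(τ)^{1/(β−1)}] dτ} ḡ(s)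
  + ∫_s^T exp{∫_s^λ [k(s,τ) − β φ̄(τ)^{1/(β−1)}] dτ} v̄(s,λ) φ̄(λ)^{β/(β−1)} dλ`
and `ḡ(s) exp{∫_s^T k(s,τ)dτ} ≥ g₀ > 0`,
`v̄(s,λ) exp{∫_s^λ k(s,τ)dτ} ≥ exp{−ϱ(λ−s)}`, then
`φ̄(s) ≥ exp{−ϱ(T−s)} g₀`, and with `δ₀ = exp{−ϱT} g₀` also
`φ̄(s) ≤ exp{∫_s^T k(s,τ)dτ} ḡ(s) + δ₀^{β/(β−1)} ∫_s^T exp{∫_s^λ k(s,τ)dτ} v̄(s,λ) dλ`. -/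
theorem integral_equation_two_sided_bounds
    {T β : ℝ} (hT : 0 < T) (hβ : β ∈ Ioo (0 : ℝ) 1)
    (φ : ℝ → ℝ) (k : ℝ → ℝ → ℝ) (g : ℝ → ℝ) (v : ℝ → ℝ → ℝ)
    (hφc : ContinuousOn φ (Icc 0 T)) (hφpos : ∀ s ∈ Icc (0 : ℝ) T, 0 < φ s)
    (hkc : ContinuousOn (fun p : ℝ × ℝ => k p.1 p.2)
      {p : ℝ × ℝ | 0 ≤ p.1 ∧ p.1 ≤ p.2 ∧ p.2 ≤ T})
    (hgc : ContinuousOn g (Icc 0 T)) (hgpos : ∀ s ∈ Icc (0 : ℝ) T, 0 < g s)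
    (hvc : ContinuousOn (fun p : ℝ × ℝ => v p.1 p.2)
      {p : ℝ × ℝ | 0 ≤ p.1 ∧ p.1 ≤ p.2 ∧ p.2 ≤ T})
    (hvpos : ∀ s lam : ℝ, 0 ≤ s → s ≤ lam → lam ≤ T → 0 < v s lam)
    (heq : ∀ s ∈ Icc (0 : ℝ) T,
      φ s = Real.exp (∫ τ in s..T, k s τ - β * φ τ ^ ((1 : ℝ) / (β - 1))) * g s
        + ∫ lam in s..T,
            Real.exp (∫ τ in s..lam, k s τ - β * φ τ ^ ((1 : ℝ) / (β - 1)))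
              * v s lam * φ lam ^ (β / (β - 1)))
    (g0 ϱ : ℝ) (hg0 : 0 < g0) (hϱ : 0 < ϱ)
    (hglb : ∀ s ∈ Icc (0 : ℝ) T, g0 ≤ g s * Real.exp (∫ τ in s..T, k s τ))
    (hvlb : ∀ s lam : ℝ, 0 ≤ s → s ≤ lam → lam ≤ T →
      Real.exp (-ϱ * (lam - s)) ≤ v s lam * Real.exp (∫ τ in s..lam, k s τ)) :
    (∀ s ∈ Icc (0 : ℝ) T, Real.exp (-ϱ * (T - s)) * g0 ≤ φ s) ∧
    (∀ s ∈ Icc (0 : ℝ) T,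
      φ s ≤ Real.exp (∫ τ in s..T, k s τ) * g s
        + (Real.exp (-ϱ * T) * g0) ^ (β / (β - 1))
            * ∫ lam in s..T, Real.exp (∫ τ in s..lam, k s τ) * v s lam) :=
  integral_equation_two_sided_bounds_general hβ φ k g v hφc hφpos hkc hgpos hvc hvpos heq g0 ϱ hg0
    hϱ hglb hvlb
end
end
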